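/- Let R be a commutative ring and S a multiplicative subset. Every u-S-projective R-module is u-S-flat. -/

import Mathlib

open CategoryTheory

universe u

def IsUSTorsionMod {R : Type u} [CommRing R] (S : Submonoid R) (X : ModuleCat.{u} R) : Prop :=
  ∃ s ∈ S, ∀ x : X, s • x = 0

def IsUSTorsion {R : Type u} [CommRing R] (S : Submonoid R) (T : Type u)
    [AddCommGroup T] [Module R T] : Prop :=
  ∃ s ∈ S, ∀ x : T, s • x = 0

noncomputable def ext (R : Type u) [CommRing R] (n : ℕ) (P M : ModuleCat.{u} R) :
    ModuleCat.{u} R :=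
  ((Ext R (ModuleCat.{u} R) n).obj (Opposite.op P)).obj M

def IsUSProjective {R : Type u} [CommRing R] (S : Submonoid R) (P : Type u)
    [AddCommGroup P] [Module R P] : Prop :=
  ∀ M : ModuleCat.{u} R, IsUSTorsionMod S (ext R 1 (ModuleCat.of R P) M)

def IsUSInjective {R : Type u} [CommRing R] (S : Submonoid R) (E : Type u)
    [AddCommGroup E] [Module R E] : Prop :=
  ∀ M : ModuleCat.{u} R, IsUSTorsionMod S (ext R 1 M (ModuleCat.of R E))

/-!
Let `0 → K → F₀ → P → 0` be the start of a projective resolution, and let `s ∈ S` kill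
`Ext¹(P, K)`. Then `s` times the class of the cocycle `F₁ → K` is a coboundary `h ∘ d`, so
`s • 𝟙 - ι ∘ h` vanishes on the image of `F₁` and descends to `q : P → F₀` with `π ∘ q = s • 𝟙 P`.
Thus multiplication by `s` on `P` factors through the projective `F₀`; applying the `R`-linear
functor `Tor₁(M, -)`, multiplication by `s` on `Tor₁(M, P)` factors through `Tor₁(M, F₀) = 0`.
-/

open CategoryTheory Limits

lemma ModuleCat.smul_eq_zero_of_iso {R : Type*} [Ring R] {M N : ModuleCat R} (e : M ≅ N) {s : R}
    (hs : ∀ x : M, s • x = 0) (y : N) : s • y = 0 := by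
  simpa using congrArg e.hom (hs (e.inv y))

namespace HomologicalComplex

variable {R C : Type*} [Semiring R] [Category* C] [Preadditive C] [Linear R C]
  {ι : Type*} (c : ComplexShape ι)

instance single_linear [HasZeroObject C] [DecidableEq ι] (j : ι) : (single C c j).Linear R where
  map_smul {A _} f s := by
    refine hom_ext _ _ fun i => ?_
    by_cases h : i = j
    · subst h
      simp [single_map_f_self]
    · exact (isZero_single_obj_X c j A i h).eq_of_src _ _

instance homologyFunctor_linear [CategoryWithHomology C] (i : ι) :
    (homologyFunctor C c i).Linear R where
  map_smul φ s := ShortComplex.homologyMap_smul ((shortComplexFunctor C c i).map φ) s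

end HomologicalComplex

namespace CategoryTheory.Functor

-- Inside `Functor`, a bare `Linear` would resolve to `Functor.Linear`.
variable {R C D : Type*} [Semiring R] [Category* C] [Abelian C] [CategoryTheory.Linear R C]
  [HasProjectiveResolutions C] [Category* D] [Abelian D] [CategoryTheory.Linear R D]

instance leftDerived_linear (F : C ⥤ D) [F.Additive] [F.Linear R] (n : ℕ) :
    (F.leftDerived n).Linear R where
  map_smul {X Y} f s := by
    let g := ProjectiveResolution.lift f (projectiveResolution X) (projectiveResolution Y)
    rw [F.leftDerived_map_eq n f g (ProjectiveResolution.lift_commutes _ _ _),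
      F.leftDerived_map_eq n (s • f) (s • g) (by
        rw [Linear.smul_comp, ProjectiveResolution.lift_commutes, Functor.map_smul,
          Linear.comp_smul]),
      Functor.map_smul, Linear.smul_comp, Linear.comp_smul]

lemma smul_id_leftDerived_obj_succ_eq_zero (F : C ⥤ D) [F.Additive] [F.Linear R] (n : ℕ)
    {X Q : C} [Projective Q] {s : R} {q : X ⟶ Q} {p : Q ⟶ X} (hqp : q ≫ p = s • 𝟙 X) :
    s • 𝟙 ((F.leftDerived (n + 1)).obj X) = 0 := by
  rw [← Functor.map_id, ← Functor.map_smul, ← hqp, Functor.map_comp,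
    (F.isZero_leftDerived_obj_projective_succ n Q).eq_zero_of_tgt ((F.leftDerived (n + 1)).map q),
    zero_comp]

end CategoryTheory.Functor

namespace CategoryTheory

lemma ShortComplex.moduleCat_exists_f_eq_smul {R : Type*} [Ring R]
    (S : ShortComplex (ModuleCat R)) {s : R} (hs : ∀ x : S.homology, s • x = 0) {z : S.X₂}
    (hz : S.g z = 0) :
    ∃ y, S.f y = s • z := by
  let c : LinearMap.ker S.g.hom := ⟨z, hz⟩
  have hc : (LinearMap.range S.moduleCatToCycles).mkQ (s • c) = 0 := by
    rw [map_smul]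
    exact ModuleCat.smul_eq_zero_of_iso S.moduleCatHomologyIso hs _
  obtain ⟨y, hy⟩ := (Submodule.Quotient.mk_eq_zero _).mp hc
  exact ⟨y, congrArg Subtype.val hy⟩

lemma ShortComplex.Exact.exists_comp_g_eq_smul_id {R C : Type*} [Semiring R] [Category* C]
    [Abelian C] [Linear R C] {S : ShortComplex C} (hS : S.Exact) [Epi S.g] {s : R}
    {h : S.X₂ ⟶ kernel S.g}
    (hh : S.f ≫ h = s • kernel.lift S.g S.f S.zero) :
    ∃ q : S.X₃ ⟶ S.X₂, q ≫ S.g = s • 𝟙 S.X₃ := by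
  let g := s • 𝟙 S.X₂ - h ≫ kernel.ι S.g
  have hg : S.f ≫ g = 0 := by
    rw [Preadditive.comp_sub, ← Category.assoc, hh, Linear.smul_comp, kernel.lift_ι,
      Linear.comp_smul, Category.comp_id, sub_self]
  refine ⟨hS.desc g hg, (cancel_epi S.g).1 ?_⟩
  rw [hS.g_desc_assoc, Preadditive.sub_comp, Category.assoc, kernel.condition, comp_zero,
    sub_zero, Linear.smul_comp, Linear.comp_smul, Category.id_comp, Category.comp_id]

namespace ProjectiveResolution

variable {R C : Type*} [Ring R] [Category* C] [Abelian C] [Linear R C] [EnoughProjectives C]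
  {X Y : C}

lemma exists_d_comp_eq_smul (P : ProjectiveResolution X) {s : R}
    (hs : ∀ e : ((Ext R C 1).obj (Opposite.op X)).obj Y, s • e = 0)
    {z : P.complex.X 1 ⟶ Y} (hz : P.complex.d 2 1 ≫ z = 0) :
    ∃ h : P.complex.X 0 ⟶ Y, P.complex.d 1 0 ≫ h = s • z := by
  let K := P.complex.linearYonedaObj R Y
  have hK : ∀ x : (K.sc' 0 1 2).homology, s • x = 0 :=
    ModuleCat.smul_eq_zero_of_iso (P.isoExt 1 Y ≪≫ K.homologyIsoSc' 0 1 2 (by simp) (by simp)) hs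
  exact (K.sc' 0 1 2).moduleCat_exists_f_eq_smul hK (z := z) hz

lemma exists_comp_π_f_zero_eq_smul_id (P : ProjectiveResolution X) {s : R}
    (hs : ∀ e : ((Ext R C 1).obj (Opposite.op X)).obj (kernel (P.π.f 0)), s • e = 0) :
    ∃ q : X ⟶ P.complex.X 0, q ≫ P.π.f 0 = s • 𝟙 X := by
  have hz : P.complex.d 2 1 ≫ kernel.lift _ _ P.complex_d_comp_π_f_zero = 0 := by
    rw [← cancel_mono (kernel.ι _), Category.assoc, kernel.lift_ι, zero_comp, P.complex.d_comp_d]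
  obtain ⟨h, hh⟩ := P.exists_d_comp_eq_smul hs hz
  exact P.exact₀.exists_comp_g_eq_smul_id hh

end ProjectiveResolution

end CategoryTheory

theorem uS_projective_implies_uS_flat
    {R : Type u} [CommRing R] (S : Submonoid R)
    (P : Type u) [AddCommGroup P] [Module R P]
    (hP : IsUSProjective S P) :
    ∀ M : ModuleCat.{u} R,
      IsUSTorsionMod S (((Tor (ModuleCat.{u} R) 1).obj M).obj (ModuleCat.of R P)) := by
  intro M
  let Res := projectiveResolution (ModuleCat.of R P)
  obtain ⟨s, hsS, hs⟩ := hP (kernel (Res.π.f 0))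
  obtain ⟨q, hq⟩ := Res.exists_comp_π_f_zero_eq_smul_id hs
  have hTor := ((MonoidalCategory.tensoringLeft _).obj M).smul_id_leftDerived_obj_succ_eq_zero 0 hq
  exact ⟨s, hsS, fun x => ConcreteCategory.congr_hom hTor x⟩
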